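/- arXiv:2403.06004 — 5 statements merged into one kernel-verified Lean document; each statement's English description precedes it below -/
import Mathlib

section
/- Let c be a locating rainbow coloring of a finite connected simple graph G, and let u and v be two distinct vertices of G. If d(u,x) = d(v,x) for every vertex x ∈ V(G) \ {u,v}, then c(u) ≠ c(v). -/
namespace LocatingRainbow

open SimpleGraph

variable {V : Type*}

/-- The internal vertices of a walk: its support without the endpoints. -/
def internalVertices {G : SimpleGraph V} {u v : V} (p : G.Walk u v) : List V :=
  p.support.tail.dropLast

/-- `c` is a rainbow vertex coloring of `G` (with colors in `Fin k`) if any two distinct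
vertices are joined by a path whose internal vertices have pairwise distinct colors. -/
def IsRainbowVertexColoring (G : SimpleGraph V) {k : ℕ} (c : V → Fin k) : Prop :=
  ∀ u v : V, u ≠ v → ∃ p : G.Walk u v, p.IsPath ∧ ((internalVertices p).map c).Nodup

/-- The distance from a vertex `v` to the color class of the color `i`. -/
noncomputable def distToColor (G : SimpleGraph V) {k : ℕ} (c : V → Fin k) (v : V) (i : Fin k) :
    ℕ :=
  sInf {m | ∃ y, c y = i ∧ G.dist v y = m}

/-- The rainbow code of a vertex `v`: the vector of distances to all color classes. -/
noncomputable def rainbowCode (G : SimpleGraph V) {k : ℕ} (c : V → Fin k) (v : V) :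
    Fin k → ℕ :=
  fun i => distToColor G c v i

/-- `c` is a locating rainbow coloring if it is a rainbow vertex coloring and distinct
vertices have distinct rainbow codes. -/
def IsLocatingRainbowColoring (G : SimpleGraph V) {k : ℕ} (c : V → Fin k) : Prop :=
  IsRainbowVertexColoring G c ∧ Function.Injective (rainbowCode G c)

/-- The rainbow vertex connection number of `G`. -/
noncomputable def rvc (G : SimpleGraph V) : ℕ :=
  sInf {k | ∃ c : V → Fin k, IsRainbowVertexColoring G c}

/-- The locating rainbow connection number of `G`. -/
noncomputable def rvcl (G : SimpleGraph V) : ℕ :=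
  sInf {k | ∃ c : V → Fin k, IsLocatingRainbowColoring G c}

variable (G : SimpleGraph V) {k : ℕ} (c : V → Fin k)

theorem distToColor_self (v : V) : distToColor G c v (c v) = 0 :=
  Nat.sInf_eq_zero.mpr (.inl ⟨v, rfl, G.dist_self⟩)

theorem distToColor_eq_of_dist_eq {u v : V} {i : Fin k}
    (h : ∀ y, c y = i → G.dist u y = G.dist v y) :
    distToColor G c u i = distToColor G c v i := by
  unfold distToColor
  congr 1
  ext m
  exact exists_congr fun y => and_congr_right fun hy => by rw [h y hy]

theorem rainbowCode_eq_of_color_eq_of_dist_eq {u v : V} (hcolor : c u = c v)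
    (hdist : ∀ x : V, x ≠ u → x ≠ v → G.dist u x = G.dist v x) :
    rainbowCode G c u = rainbowCode G c v := by
  funext i
  by_cases hi : i = c u
  · subst hi
    simp only [rainbowCode]
    rw [distToColor_self, hcolor, distToColor_self]
  · refine distToColor_eq_of_dist_eq G c fun y hy => hdist y ?_ ?_
    · rintro rfl
      exact hi hy.symm
    · rintro rfl
      exact hi (hy.symm.trans hcolor.symm)

end LocatingRainbow

open LocatingRainbow in
theorem color_ne_of_dist_eq_general {V : Type*} (G : SimpleGraph V)
    {k : ℕ} (c : V → Fin k) (hc : IsLocatingRainbowColoring G c)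
    (u v : V) (huv : u ≠ v)
    (hdist : ∀ x : V, x ≠ u → x ≠ v → G.dist u x = G.dist v x) :
    c u ≠ c v := fun hcolor =>
  huv (hc.2 (rainbowCode_eq_of_color_eq_of_dist_eq G c hcolor hdist))

open LocatingRainbow in
/-- If `c` is a locating rainbow coloring of a finite connected simple graph `G` and
`u ≠ v` satisfy `d(u,x) = d(v,x)` for every other vertex `x`, then `c u ≠ c v`. -/
theorem color_ne_of_dist_eq {V : Type*} [Fintype V] (G : SimpleGraph V) (hG : G.Connected)
    {k : ℕ} (c : V → Fin k) (hc : IsLocatingRainbowColoring G c)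
    (u v : V) (huv : u ≠ v)
    (hdist : ∀ x : V, x ≠ u → x ≠ v → G.dist u x = G.dist v x) :
    c u ≠ c v :=
  color_ne_of_dist_eq_general G c hc u v huv hdist
end

section
/- If G is a finite connected simple graph of order n ≥ 3 and rvcl(G) = r, then n ≤ r · diam(G)^(r−1), where diam(G) is the diameter of G. -/
open SimpleGraph

section Aux
variable {V : Type*}

lemma aux_exists_locating [Fintype V] (G : SimpleGraph V) (hG : G.Connected) :
    ∃ c : V → Fin (Fintype.card V), LocatingRainbow.IsLocatingRainbowColoring G c := by
  classical
  refine ⟨Fintype.equivFin V, ?_, ?_⟩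
  · intro u v huv
    refine ⟨((hG.preconnected u v).some.toPath : G.Path u v).1,
      ((hG.preconnected u v).some.toPath : G.Path u v).2, ?_⟩
    refine List.Nodup.map (Fintype.equivFin V).injective ?_
    exact (((hG.preconnected u v).some.toPath : G.Path u v).2.support_nodup).sublist
      ((List.dropLast_sublist _).trans (List.tail_sublist _))
  · intro v w hvw
    have h0 : LocatingRainbow.distToColor G (Fintype.equivFin V) v (Fintype.equivFin V v) = 0 :=
      Nat.sInf_eq_zero.mpr (Or.inl ⟨v, rfl, G.dist_self⟩)
    have h1 : LocatingRainbow.distToColor G (Fintype.equivFin V) w (Fintype.equivFin V v) = 0 := by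
      exact (h0.symm.trans (congrFun hvw (Fintype.equivFin V v))).symm
    rcases Nat.sInf_eq_zero.mp h1 with h2 | h2
    · obtain ⟨y, hy, hd⟩ := h2
      have : w = y := hG.dist_eq_zero_iff.mp hd
      subst this
      exact ((Fintype.equivFin V).injective hy).symm ▸ rfl
    · exact absurd h2 (by
        intro h
        have : (G.dist w v) ∈ ({m | ∃ y, Fintype.equivFin V y = Fintype.equivFin V v ∧ G.dist w y = m} : Set ℕ) :=
          ⟨v, rfl, rfl⟩
        rw [h] at this
        exact this)
end Aux

open LocatingRainbow in
/-- If `G` is a finite connected simple graph of order `n ≥ 3` and `rvcl(G) = r`, then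
`n ≤ r * diam(G) ^ (r - 1)`. -/
theorem card_le_rvcl_mul_diam_pow {V : Type*} [Fintype V] (G : SimpleGraph V)
    (hG : G.Connected) (hn : 3 ≤ Fintype.card V) (r : ℕ) (hr : rvcl G = r) :
    Fintype.card V ≤ r * G.diam ^ (r - 1) := by
  classical
  have hVne : Nonempty V := Fintype.card_pos_iff.mp (by omega)
  have hnt : Nontrivial V := Fintype.one_lt_card_iff_nontrivial.mp (by omega)
  -- the infimum is attained
  have hne : {k | ∃ c : V → Fin k, IsLocatingRainbowColoring G c}.Nonempty :=
    ⟨Fintype.card V, aux_exists_locating G hG⟩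
  have hmem := Nat.sInf_mem hne
  rw [show sInf {k | ∃ c : V → Fin k, IsLocatingRainbowColoring G c} = r from hr] at hmem
  obtain ⟨c, hcrb, hinj⟩ := hmem
  -- diameter facts
  have hetop : G.ediam ≠ ⊤ := by
    obtain ⟨u, v, huv⟩ := G.exists_edist_eq_ediam_of_finite
    rw [← huv]
    exact edist_ne_top_iff_reachable.mpr (hG.preconnected u v)
  have hd1 : 1 ≤ G.diam := by
    obtain ⟨u, v, huv⟩ := exists_pair_ne V
    exact le_trans (hG.pos_dist_of_ne huv) (G.dist_le_diam hetop)
  -- facts about codes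
  have hself : ∀ x : V, distToColor G c x (c x) = 0 := fun x =>
    Nat.sInf_eq_zero.mpr (Or.inl ⟨x, rfl, G.dist_self⟩)
  have hunused : ∀ (j : Fin r), (¬ ∃ y, c y = j) → ∀ x, distToColor G c x j = 0 := by
    intro j h x
    rw [distToColor]
    convert Nat.sInf_empty using 2
    ext m
    simp only [Set.mem_setOf_eq, Set.mem_empty_iff_false, iff_false]
    rintro ⟨y, hy, -⟩
    exact h ⟨y, hy⟩
  have hbd : ∀ (x : V) (j : Fin r), distToColor G c x j ≤ G.diam := by
    intro x j
    by_cases h : ∃ y, c y = j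
    · obtain ⟨y, hy⟩ := h
      exact le_trans (Nat.sInf_le ⟨y, hy, rfl⟩) (G.dist_le_diam hetop)
    · rw [hunused j h x]
      exact Nat.zero_le _
  have hz : ∀ (x : V) (j : Fin r), distToColor G c x j = 0 → (¬ ∃ y, c y = j) ∨ c x = j := by
    intro x j h
    rcases Nat.sInf_eq_zero.mp h with h0 | hemp
    · obtain ⟨y, hy, hd0⟩ := h0
      right
      have : x = y := hG.dist_eq_zero_iff.mp hd0
      rw [this, hy]
    · left
      rintro ⟨y, hy⟩
      have : (G.dist x y) ∈ ({m | ∃ z, c z = j ∧ G.dist x z = m} : Set ℕ) := ⟨y, hy, rfl⟩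
      rw [hemp] at this
      exact this
  -- the injection
  set d := G.diam with hd
  let Φ : V → Σ i : Fin r, ({j : Fin r // j ≠ i} → Fin d) := fun x =>
    ⟨c x, fun j => ⟨distToColor G c x j.1 - 1, by
      have := hbd x j.1; omega⟩⟩
  have hΦ : Function.Injective Φ := by
    intro v w hvw
    have h1 : c v = c w := congrArg Sigma.fst hvw
    apply hinj
    funext j
    show distToColor G c v j = distToColor G c w j
    by_cases hj : j = c v
    · rw [hj, hself v, h1, hself w]
    · have hjw : j ≠ c w := h1 ▸ hj
      have h2 : distToColor G c v j - 1 = distToColor G c w j - 1 := by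
        have := congrArg (fun p : Σ i : Fin r, ({j' : Fin r // j' ≠ i} → Fin d) =>
          if h : j ≠ p.1 then (p.2 ⟨j, h⟩ : ℕ) else 0) hvw
        simpa [Φ, hj, hjw] using this
      by_cases hv0 : distToColor G c v j = 0
      · rcases hz v j hv0 with h3 | h3
        · rw [hv0, hunused j h3 w]
        · exact absurd h3.symm hj
      · by_cases hw0 : distToColor G c w j = 0
        · rcases hz w j hw0 with h3 | h3
          · rw [hw0, hunused j h3 v]
          · exact absurd h3.symm hjw
        · omega
  have hcard := Fintype.card_le_of_injective Φ hΦ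
  have hcsub : ∀ i : Fin r, Fintype.card {j : Fin r // j ≠ i} = r - 1 := by
    intro i
    have h := Fintype.card_subtype_compl (fun j : Fin r => j = i)
    rw [Fintype.card_subtype_eq, Fintype.card_fin] at h
    exact h
  calc Fintype.card V ≤ Fintype.card (Σ i : Fin r, ({j : Fin r // j ≠ i} → Fin d)) := hcard
    _ = ∑ i : Fin r, d ^ (r - 1) := by
        rw [Fintype.card_sigma]
        refine Finset.sum_congr rfl fun i _ => ?_
        rw [Fintype.card_fun, Fintype.card_fin, hcsub i]
    _ = r * d ^ (r - 1) := by
        rw [Finset.sum_const, Finset.card_univ, Fintype.card_fin, smul_eq_mul]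
end

section
/- The cycle graph C_8 on 8 vertices satisfies rvcl(C_8) = 4. -/
/-!
A path with `ℓ` edges has `ℓ - 1` internal vertices, so a rainbow vertex `k`-colouring of `C₈`
needs `k + 1 ≥ diam C₈ = 4`. With `k = 3`, the only paths between antipodal vertices `u` and
`u + 4` that can be rainbow are the two arcs of length `4`, so for every `u` the three interior
vertices of one of these arcs carry all three colours. An exhaustive check over the `3⁸`
colourings shows that no colouring with this property has injective rainbow codes, while
`0 0 0 1 0 2 3 1` is a locating rainbow `4`-colouring. Both checks are finite computations
because the distance in `C_{n+2}` is `min ((v - u) mod (n + 2)) ((u - v) mod (n + 2))`.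
-/

namespace LocatingRainbow

open SimpleGraph Finset

section Walks

variable {V : Type*} {G : SimpleGraph V} {u v : V} {k : ℕ}

lemma length_internalVertices (p : G.Walk u v) : (internalVertices p).length = p.length - 1 := by
  simp [internalVertices]

lemma internalVertices_reverse (p : G.Walk u v) :
    internalVertices p.reverse = (internalVertices p).reverse := by
  simp [internalVertices, List.tail_reverse, List.dropLast_reverse, List.tail_dropLast]

lemma length_le_of_nodup_internalVertices (c : V → Fin k) (p : G.Walk u v)
    (h : ((internalVertices p).map c).Nodup) : p.length ≤ k + 1 := by
  have := h.length_le_card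
  rw [List.length_map, length_internalVertices, Fintype.card_fin] at this
  omega

lemma IsRainbowVertexColoring.dist_le {c : V → Fin k} (hc : IsRainbowVertexColoring G c)
    (huv : u ≠ v) : G.dist u v ≤ k + 1 := by
  obtain ⟨p, -, hp⟩ := hc u v huv
  exact (SimpleGraph.dist_le p).trans (length_le_of_nodup_internalVertices c p hp)

end Walks

section Codes

variable {V : Type*} [Fintype V] {k : ℕ}

def colorClass (c : V → Fin k) (i : Fin k) : Finset V := univ.filter (c · = i)

def colorDist (d : V → V → ℕ) (c : V → Fin k) (v : V) (i : Fin k) : ℕ :=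
  if h : (colorClass c i).Nonempty then (colorClass c i).inf' h (d v) else 0

lemma distToColor_eq_colorDist (G : SimpleGraph V) (c : V → Fin k) (v : V) (i : Fin k) :
    distToColor G c v i = colorDist G.dist c v i := by
  have hset : {m | ∃ y, c y = i ∧ G.dist v y = m} = G.dist v '' ↑(colorClass c i) := by
    ext; simp [colorClass]
  rw [distToColor, colorDist, hset]
  split_ifs with h
  · exact (inf'_eq_csInf_image _ h _).symm
  · rw [not_nonempty_iff_eq_empty.mp h, coe_empty, Set.image_empty, Nat.sInf_empty]

lemma rainbowCode_eq_colorDist (G : SimpleGraph V) (c : V → Fin k) :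
    rainbowCode G c = fun v i => colorDist G.dist c v i := by
  ext v i
  exact distToColor_eq_colorDist G c v i

end Codes

section Cycle

open Fin.NatCast

variable {n : ℕ}

def cycleArc (u : Fin (n + 2)) : (d : ℕ) → (cycleGraph (n + 2)).Walk u (u + d)
  | 0 => Walk.nil.copy rfl (by simp)
  | d + 1 => (Walk.cons (cycleGraph_adj.mpr (Or.inr (add_sub_cancel_left u 1)))
      (cycleArc (u + 1) d)).copy rfl (by push_cast; abel)

lemma length_cycleArc (u : Fin (n + 2)) (d : ℕ) : (cycleArc u d).length = d := by
  induction d generalizing u with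
  | zero => simp [cycleArc]
  | succ d ih => simp [cycleArc, ih]

lemma support_cycleArc (u : Fin (n + 2)) (d : ℕ) :
    (cycleArc u d).support = (List.range' 0 (d + 1)).map fun j : ℕ => u + (j : Fin (n + 2)) := by
  induction d generalizing u with
  | zero => simp [cycleArc]
  | succ d ih =>
    rw [List.range'_succ]
    simp only [cycleArc, Walk.support_copy, Walk.support_cons, ih, List.range'_succ_left,
      List.map_cons, List.map_map]
    refine congrArg₂ _ (by simp) (List.map_congr_left fun j _ => ?_)
    simp only [Function.comp_apply, Nat.cast_add, Nat.cast_one]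
    abel

lemma internalVertices_cycleArc (u : Fin (n + 2)) (d : ℕ) :
    internalVertices (cycleArc u d) =
      (List.range' 1 (d - 1)).map fun j : ℕ => u + (j : Fin (n + 2)) := by
  rw [internalVertices, support_cycleArc, ← List.map_tail, ← List.map_dropLast]
  congr 1
  cases d with
  | zero => rfl
  | succ e =>
    change (List.range' 1 (e + 1)).dropLast = _
    simp [List.range'_1_concat]

lemma isPath_cycleArc (u : Fin (n + 2)) {d : ℕ} (hd : d < n + 2) : (cycleArc u d).IsPath := by
  rw [Walk.isPath_def, support_cycleArc]
  refine List.Nodup.map_on (fun i hi j hj hij => ?_) List.nodup_range'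
  simp only [List.mem_range'_1] at hi hj
  simpa [Fin.ext_iff, Fin.val_natCast, Nat.mod_eq_of_lt (show i < n + 2 by omega),
    Nat.mod_eq_of_lt (show j < n + 2 by omega)] using hij

def cycleArcTo (u v : Fin (n + 2)) : (cycleGraph (n + 2)).Walk u v :=
  (cycleArc u (v - u).val).copy rfl (by simp)

lemma length_cycleArcTo (u v : Fin (n + 2)) : (cycleArcTo u v).length = (v - u).val := by
  simp [cycleArcTo, length_cycleArc]

lemma internalVertices_cycleArcTo (u v : Fin (n + 2)) :
    internalVertices (cycleArcTo u v) =
      (List.range' 1 ((v - u).val - 1)).map fun j : ℕ => u + (j : Fin (n + 2)) := by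
  simp [cycleArcTo, internalVertices, ← internalVertices_cycleArc]

lemma isPath_cycleArcTo (u v : Fin (n + 2)) : (cycleArcTo u v).IsPath :=
  (Walk.isPath_copy _ _ _).mpr (isPath_cycleArc u (v - u).isLt)

lemma min_val_add_one_le (x : Fin (n + 2)) :
    min (x + 1).val (-(x + 1)).val ≤ min x.val (-x).val + 1 := by
  rcases eq_or_ne x 0 with rfl | hx
  · simp
  have h₁ : (x + 1).val ≤ x.val + 1 := by
    rw [Fin.val_add_one]; split_ifs <;> omega
  have h₂ : (-(x + 1)).val ≤ (-x).val := by
    rw [neg_add', Fin.val_sub_one_of_ne_zero (neg_ne_zero.mpr hx)]; omega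
  omega

lemma dist_cycleGraph (u v : Fin (n + 2)) :
    (cycleGraph (n + 2)).dist u v = min (v - u).val (u - v).val := by
  refine le_antisymm (le_min ?_ ?_) ?_
  · simpa [length_cycleArcTo] using dist_le (cycleArcTo u v)
  · rw [SimpleGraph.dist_comm]
    simpa [length_cycleArcTo] using dist_le (cycleArcTo v u)
  obtain ⟨p, hp⟩ := (cycleGraph_connected (n := n + 1)).exists_walk_length_eq_dist u v
  rw [← hp]
  clear hp
  induction p with
  | nil => simp
  | @cons u b v h q ih =>
    rw [Walk.length_cons]
    rcases cycleGraph_adj.mp h with h | h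
    · have := min_val_add_one_le (b - v)
      rw [show u - v = b - v + 1 by rw [← h]; abel, show v - u = -(b - v + 1) by rw [← h]; abel]
      rw [← neg_sub] at ih
      omega
    · have := min_val_add_one_le (v - b)
      rw [show v - u = v - b + 1 by rw [← h]; abel, show u - v = -(v - b + 1) by rw [← h]; abel]
      rw [← neg_sub v] at ih
      omega

lemma isRainbowVertexColoring_cycleGraph_of_arcs {k : ℕ} {c : Fin (n + 2) → Fin k}
    (h : ∀ u v : Fin (n + 2), u ≠ v → ((internalVertices (cycleArcTo u v)).map c).Nodup ∨
      ((internalVertices (cycleArcTo v u)).map c).Nodup) :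
    IsRainbowVertexColoring (cycleGraph (n + 2)) c := by
  intro u v huv
  rcases h u v huv with h | h
  · exact ⟨cycleArcTo u v, isPath_cycleArcTo u v, h⟩
  · refine ⟨(cycleArcTo v u).reverse, (isPath_cycleArcTo v u).reverse, ?_⟩
    rwa [internalVertices_reverse, List.map_reverse, List.nodup_reverse]

lemma rainbowCode_cycleGraph {k : ℕ} (c : Fin (n + 2) → Fin k) :
    rainbowCode (cycleGraph (n + 2)) c =
      fun v i => colorDist (fun x y => min (y - x).val (x - y).val) c v i := by
  have hd : (cycleGraph (n + 2)).dist = fun x y => min (y - x).val (x - y).val :=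
    funext₂ dist_cycleGraph
  rw [rainbowCode_eq_colorDist, hd]

end Cycle

section CycleEight

variable {k : ℕ}

lemma internalVertices_cycleGraph_eight {u : Fin 8} (p : (cycleGraph 8).Walk u (u + 4))
    (hp : p.length = 4) :
    internalVertices p = [u + 1, u + 2, u + 3] ∨ internalVertices p = [u - 1, u - 2, u - 3] := by
  -- each step is `±1`, and four of them add up to `4` only if they all have the same sign
  have steps : ∀ w x₁ x₂ x₃ : Fin 8, (cycleGraph 8).Adj w x₁ → (cycleGraph 8).Adj x₁ x₂ →
      (cycleGraph 8).Adj x₂ x₃ → (cycleGraph 8).Adj x₃ (w + 4) →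
      [x₁, x₂, x₃] = [w + 1, w + 2, w + 3] ∨ [x₁, x₂, x₃] = [w - 1, w - 2, w - 3] := by
    decide
  generalize hv : u + 4 = v at p
  cases p with
  | nil => simp at hp
  | cons h₁ p =>
  cases p with
  | nil => simp at hp
  | cons h₂ p =>
  cases p with
  | nil => simp at hp
  | cons h₃ p =>
  cases p with
  | nil => simp at hp
  | cons h₄ p =>
  cases p with
  | nil => exact steps _ _ _ _ h₁ h₂ h₃ (hv ▸ h₄)
  | cons _ _ => simp at hp

def AntipodalRainbow (c : Fin 8 → Fin k) : Prop :=
  ∀ u : Fin 8, ([u + 1, u + 2, u + 3].map c).Nodup ∨ ([u - 1, u - 2, u - 3].map c).Nodup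

instance (c : Fin 8 → Fin k) : Decidable (AntipodalRainbow c) := by
  unfold AntipodalRainbow; infer_instance

lemma dist_cycleGraph_eight_add_four (u : Fin 8) : (cycleGraph 8).dist u (u + 4) = 4 := by
  simp only [dist_cycleGraph, add_sub_cancel_left, sub_add_cancel_left]
  decide

lemma IsRainbowVertexColoring.antipodalRainbow {c : Fin 8 → Fin k}
    (hc : IsRainbowVertexColoring (cycleGraph 8) c) (hk : k ≤ 3) : AntipodalRainbow c := by
  intro u
  obtain ⟨p, -, hp⟩ := hc u (u + 4) (by simp)
  have h₁ : 4 ≤ p.length := dist_cycleGraph_eight_add_four u ▸ SimpleGraph.dist_le p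
  have h₂ := length_le_of_nodup_internalVertices c p hp
  rcases internalVertices_cycleGraph_eight p (by omega) with h | h
  · exact Or.inl (h ▸ hp)
  · exact Or.inr (h ▸ hp)

lemma three_le_of_isRainbowVertexColoring {c : Fin 8 → Fin k}
    (hc : IsRainbowVertexColoring (cycleGraph 8) c) : 3 ≤ k := by
  have := hc.dist_le (show (0 : Fin 8) ≠ 0 + 4 by decide)
  rw [dist_cycleGraph_eight_add_four] at this
  omega

lemma not_injective_colorDist_of_antipodalRainbow :
    ∀ c : Fin 8 → Fin 3, AntipodalRainbow c →
      ¬ Function.Injective fun v i =>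
        colorDist (fun x y : Fin 8 => min (y - x).val (x - y).val) c v i := by
  simp only [Fin.forall_fin_succ_pi, Fin.forall_fin_zero_pi]
  decide +kernel

lemma not_isLocatingRainbowColoring_cycleGraph_eight (c : Fin 8 → Fin 3) :
    ¬ IsLocatingRainbowColoring (cycleGraph 8) c := by
  rintro ⟨hc, hinj⟩
  rw [rainbowCode_cycleGraph] at hinj
  exact not_injective_colorDist_of_antipodalRainbow c (hc.antipodalRainbow le_rfl) hinj

lemma exists_isLocatingRainbowColoring_cycleGraph_eight :
    ∃ c : Fin 8 → Fin 4, IsLocatingRainbowColoring (cycleGraph 8) c := by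
  refine ⟨![0, 0, 0, 1, 0, 2, 3, 1], isRainbowVertexColoring_cycleGraph_of_arcs ?_, ?_⟩
  · simp only [internalVertices_cycleArcTo]
    decide +kernel
  · rw [rainbowCode_cycleGraph]
    decide +kernel

end CycleEight

end LocatingRainbow

open LocatingRainbow SimpleGraph in
/-- The cycle graph `C_8` satisfies `rvcl(C_8) = 4`. -/
theorem rvcl_cycleGraph_eight : rvcl (cycleGraph 8) = 4 := by
  obtain ⟨c, hc⟩ := exists_isLocatingRainbowColoring_cycleGraph_eight
  refine le_antisymm (Nat.sInf_le ⟨c, hc⟩) (le_csInf ⟨4, c, hc⟩ ?_)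
  rintro k ⟨c, hc⟩
  by_contra! hk
  obtain rfl : k = 3 := by
    have := three_le_of_isRainbowVertexColoring hc.1
    omega
  exact not_isLocatingRainbowColoring_cycleGraph_eight c hc
end

section
/- Let n ≥ 5 and t ∈ {2, 3}, let R_(n,t) be the (n,t)-regular graph of order n (in which every vertex has degree n − t), and let c be a locating rainbow k-coloring of R_(n,t) with k ≥ 3. Then the rainbow code of each vertex contains at most t − 1 entries equal to 2. -/
namespace LocatingRainbow

open SimpleGraph

/-- The `(n,2)`-regular graph (for even `n`): the complete graph on `Fin n` with the
perfect matching `{vᵢ v_{i+n/2}}` (indices mod `n`) removed; every vertex has degree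
`n - 2`. -/
def Rn2 (n : ℕ) : SimpleGraph (Fin n) where
  Adj i j := i ≠ j ∧ (i.val + n / 2) % n ≠ j.val ∧ (j.val + n / 2) % n ≠ i.val
  symm := ⟨fun _ _ ⟨h1, h2, h3⟩ => ⟨h1.symm, h3, h2⟩⟩
  loopless := ⟨fun _ h => h.1 rfl⟩

/-- The `(n,3)`-regular graph: the complement of the cycle `C_n`, i.e. the complete graph
with the edges of a Hamiltonian cycle removed; every vertex has degree `n - 3`. -/
def Rn3 (n : ℕ) : SimpleGraph (Fin n) := (cycleGraph n)ᶜ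

/-- The `(n,t)`-regular graph for `t ∈ {2, 3}`. -/
def Rnt (n t : ℕ) : SimpleGraph (Fin n) := if t = 2 then Rn2 n else Rn3 n

end LocatingRainbow

namespace LocatingRainbow

open SimpleGraph

section RainbowCode

variable {V : Type*} {G : SimpleGraph V} {k : ℕ} {c : V → Fin k} {v : V} {i : Fin k} {m : ℕ}

/-- The hypothesis `m ≠ 0` excludes the junk value `sInf ∅ = 0` of an unused color. -/
theorem exists_dist_eq_of_rainbowCode_eq (h : rainbowCode G c v i = m) (hm : m ≠ 0) :
    ∃ y, c y = i ∧ G.dist v y = m := by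
  have hne : {m | ∃ y, c y = i ∧ G.dist v y = m}.Nonempty :=
    Set.nonempty_iff_ne_empty.mpr fun he => hm (by rw [← h]; simp [rainbowCode, distToColor, he])
  rw [← h]
  exact Nat.sInf_mem hne

theorem ncard_rainbowCode_eq_le [Finite V] (hm : m ≠ 0) :
    {i | rainbowCode G c v i = m}.ncard ≤ {y | G.dist v y = m}.ncard :=
  calc {i | rainbowCode G c v i = m}.ncard ≤ (c '' {y | G.dist v y = m}).ncard :=
        Set.ncard_le_ncard fun i hi =>
          (exists_dist_eq_of_rainbowCode_eq hi hm).imp fun y hy => ⟨hy.2, hy.1⟩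
    _ ≤ {y | G.dist v y = m}.ncard := Set.ncard_image_le

theorem setOf_dist_eq_two_subset_compl_neighborSet :
    {y | G.dist v y = 2} ⊆ Gᶜ.neighborSet v := by
  intro y hy
  refine (compl_adj G v y).mpr ⟨?_, fun hadj => ?_⟩
  · rintro rfl
    simp at hy
  · simp [dist_eq_one_iff_adj.mpr hadj] at hy

theorem ncard_rainbowCode_eq_two_le [Finite V] :
    {i | rainbowCode G c v i = 2}.ncard ≤ (Gᶜ.neighborSet v).ncard :=
  (ncard_rainbowCode_eq_le two_ne_zero).trans
    (Set.ncard_le_ncard setOf_dist_eq_two_subset_compl_neighborSet)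

end RainbowCode

theorem ncard_neighborSet_cycleGraph_le {n : ℕ} (v : Fin n) :
    ((cycleGraph n).neighborSet v).ncard ≤ 2 := by
  match n, v with
  | 1, _ => simp [cycleGraph_one_eq_bot]
  | n + 2, v =>
    rw [cycleGraph_neighborSet]
    exact (Set.ncard_insert_le _ _).trans (by simp)

theorem ncard_compl_neighborSet_Rn3_le {n : ℕ} (v : Fin n) :
    ((Rn3 n)ᶜ.neighborSet v).ncard ≤ 2 := by
  rw [Rn3, compl_compl]
  exact ncard_neighborSet_cycleGraph_le v

theorem add_half_mod_add_half_mod {n w : ℕ} (hn : Even n) (hw : w < n) :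
    ((w + n / 2) % n + n / 2) % n = w := by
  have hhalf : n / 2 + n / 2 = n := by
    obtain ⟨m, rfl⟩ := hn
    omega
  rw [Nat.mod_add_mod, add_assoc, hhalf, Nat.add_mod_right, Nat.mod_eq_of_lt hw]

theorem val_eq_of_mem_compl_neighborSet_Rn2 {n : ℕ} (hn : Even n) {v w : Fin n}
    (hw : w ∈ (Rn2 n)ᶜ.neighborSet v) : w.val = (v.val + n / 2) % n := by
  obtain ⟨hvw, hna⟩ := (compl_adj _ v w).mp hw
  simp only [Rn2, ne_eq, not_and, not_not] at hna
  by_contra hne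
  have hwv := hna hvw (Ne.symm hne)
  rw [← hwv, add_half_mod_add_half_mod hn w.isLt] at hne
  exact hne rfl

theorem ncard_compl_neighborSet_Rn2_le {n : ℕ} (hn : Even n) (v : Fin n) :
    ((Rn2 n)ᶜ.neighborSet v).ncard ≤ 1 :=
  (Set.ncard_le_one_iff).mpr fun ha hb => Fin.ext <|
    (val_eq_of_mem_compl_neighborSet_Rn2 hn ha).trans
      (val_eq_of_mem_compl_neighborSet_Rn2 hn hb).symm

theorem ncard_compl_neighborSet_Rnt_le {n t : ℕ} (ht : t = 2 ∨ t = 3)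
    (hpar : t = 2 → Even n) (v : Fin n) :
    ((Rnt n t)ᶜ.neighborSet v).ncard ≤ t - 1 := by
  rcases ht with rfl | rfl
  · exact ncard_compl_neighborSet_Rn2_le (hpar rfl) v
  · exact ncard_compl_neighborSet_Rn3_le v

end LocatingRainbow

open LocatingRainbow in
theorem rainbowCode_entries_two_le_general {n t k : ℕ} (ht : t = 2 ∨ t = 3)
    (hpar : t = 2 → Even n) (c : Fin n → Fin k) (v : Fin n) :
    {i : Fin k | rainbowCode (Rnt n t) c v i = 2}.ncard ≤ t - 1 :=
  ncard_rainbowCode_eq_two_le.trans (ncard_compl_neighborSet_Rnt_le ht hpar v)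

open LocatingRainbow in
/-- For `n ≥ 5`, `t ∈ {2,3}` (with `n` even in case `t = 2`), and a locating rainbow
`k`-coloring `c` of the `(n,t)`-regular graph with `k ≥ 3`, the rainbow code of each
vertex contains at most `t - 1` entries equal to `2`. -/
theorem rainbowCode_entries_two_le {n t k : ℕ} (hn : 5 ≤ n) (ht : t = 2 ∨ t = 3)
    (hpar : t = 2 → Even n) (hk : 3 ≤ k) (c : Fin n → Fin k)
    (hc : IsLocatingRainbowColoring (Rnt n t) c) (v : Fin n) :
    {i : Fin k | rainbowCode (Rnt n t) c v i = 2}.ncard ≤ t - 1 :=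
  rainbowCode_entries_two_le_general ht hpar c v
end

section
/- Let n ≥ 5 and t ∈ {2, 3}, let R_(n,t) be the (n,t)-regular graph of order n (in which every vertex has degree n − t), and let c be a locating rainbow r-coloring of R_(n,t) with r ≥ 3. Then every color is used on at most 1 + Σ_{k=1}^{t−1} C(r−1, t−k) vertices, where C(a,b) denotes the binomial coefficient. -/
/-!
If every vertex has at most `d` non-neighbours and there are more than `2 * d` vertices, any
two non-adjacent vertices have a common neighbour, so the diameter is at most `2` (here
`d = t - 1`). Every rainbow code then has entries in `{0, 1, 2}`, and on a color class the
zero entries are fixed (the class's own color and the unused colors), so the code of a vertex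
is determined by its set of colors at distance exactly `2`. Each such color is carried by a
non-neighbour, so this set has at most `d` elements, none of them the class's color. Since
codes are distinct, the class has at most `∑_{j ≤ d} C(r - 1, j)` vertices, which is the
claimed bound for `t ∈ {2, 3}`.
-/

namespace LocatingRainbow

open SimpleGraph Finset

section Diameter

variable {V : Type*} {G : SimpleGraph V}

theorem ediam_le_two_of_ncard_compl_neighborSet_le [Finite V] {d : ℕ}
    (hdeg : ∀ v, (Gᶜ.neighborSet v).ncard ≤ d) (hcard : 2 * d < Nat.card V) :
    G.ediam ≤ 2 := by
  refine ediam_le_of_edist_le fun u v => ?_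
  by_cases huv : G.Adj u v ∨ u = v
  · exact (edist_le_one_iff_adj_or_eq.mpr huv).trans (by norm_num)
  push Not at huv
  obtain ⟨hnadj, hne⟩ := huv
  have hcover : (Gᶜ.neighborSet u ∪ Gᶜ.neighborSet v).ncard < Nat.card V :=
    (Set.ncard_union_le _ _).trans_lt (by linarith [hdeg u, hdeg v])
  obtain ⟨x, hx⟩ : ∃ x, x ∉ Gᶜ.neighborSet u ∪ Gᶜ.neighborSet v := by
    by_contra! h
    rw [Set.eq_univ_of_forall h, Set.ncard_univ] at hcover
    exact hcover.false
  simp only [Set.mem_union, mem_neighborSet, compl_adj, not_or, not_and, not_not] at hx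
  have hxu : u ≠ x := by rintro rfl; exact hnadj (hx.2 (Ne.symm hne)).symm
  have hxv : x ≠ v := by rintro rfl; exact hnadj (hx.1 hne)
  calc G.edist u v ≤ (Walk.cons (hx.1 hxu) (Walk.cons (hx.2 hxv.symm).symm Walk.nil)).length :=
        edist_le _
    _ = 2 := rfl

theorem preconnected_of_ediam_le_two (h : G.ediam ≤ 2) : G.Preconnected :=
  preconnected_of_ediam_ne_top (h.trans_lt (by decide)).ne

theorem dist_le_two_of_ediam_le_two (h : G.ediam ≤ 2) (u v : V) : G.dist u v ≤ 2 :=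
  ENat.toNat_le_of_le_natCast (edist_le_ediam.trans h)

end Diameter

section Coloring

variable {V : Type*} {G : SimpleGraph V} {k : ℕ} {c : V → Fin k} {u v y : V} {i : Fin k}

theorem distToColor_le_dist (hy : c y = i) : distToColor G c v i ≤ G.dist v y :=
  Nat.sInf_le ⟨y, hy, rfl⟩

/-- An unused color has distance `0` from every vertex (the junk value `sInf ∅ = 0`). -/
theorem distToColor_eq_zero_of_forall_ne (h : ∀ y, c y ≠ i) : distToColor G c v i = 0 := by
  simp [distToColor, h]

theorem exists_dist_eq_distToColor (h : ∃ y, c y = i) :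
    ∃ y, c y = i ∧ G.dist v y = distToColor G c v i :=
  Nat.sInf_mem (s := {m | ∃ y, c y = i ∧ G.dist v y = m}) (h.elim fun y hy => ⟨_, y, hy, rfl⟩)

theorem distToColor_eq_zero_iff (hG : G.Preconnected) :
    distToColor G c v i = 0 ↔ c v = i ∨ ∀ y, c y ≠ i := by
  refine ⟨fun h => ?_, ?_⟩
  · refine or_iff_not_imp_right.mpr fun hi => ?_
    push Not at hi
    obtain ⟨y, hy, hdist⟩ := exists_dist_eq_distToColor (G := G) (v := v) hi
    rwa [(hG v y).dist_eq_zero_iff.mp (hdist.trans h)]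
  · rintro (hv | hi)
    · exact Nat.le_zero.mp ((distToColor_le_dist hv).trans (SimpleGraph.dist_self ..).le)
    · exact distToColor_eq_zero_of_forall_ne hi

theorem distToColor_le_two (h : G.ediam ≤ 2) : distToColor G c v i ≤ 2 := by
  by_cases hi : ∃ y, c y = i
  · obtain ⟨y, hy⟩ := hi
    exact (distToColor_le_dist hy).trans (dist_le_two_of_ediam_le_two h v y)
  · push Not at hi
    simp [distToColor_eq_zero_of_forall_ne hi]

variable (G c) in
noncomputable def farColors (v : V) : Finset (Fin k) := {i | distToColor G c v i = 2}

theorem coe_farColors_subset_image :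
    (farColors G c v : Set (Fin k)) ⊆ c '' Gᶜ.neighborSet v := by
  intro i hi
  have hi : distToColor G c v i = 2 := by simpa [farColors] using hi
  have hused : ∃ y, c y = i := by
    by_contra! h
    simp [distToColor_eq_zero_of_forall_ne h] at hi
  obtain ⟨y, hy, hdist⟩ := exists_dist_eq_distToColor (G := G) (v := v) hused
  rw [hi] at hdist
  refine ⟨y, ⟨?_, fun hadj => ?_⟩, hy⟩
  · rintro rfl
    simp at hdist
  · rw [dist_eq_one_iff_adj.mpr hadj] at hdist
    omega

theorem card_farColors_le [Finite V] : #(farColors G c v) ≤ (Gᶜ.neighborSet v).ncard := by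
  rw [← Set.ncard_coe_finset]
  exact (Set.ncard_le_ncard coe_farColors_subset_image).trans Set.ncard_image_le

theorem color_notMem_farColors (hG : G.Preconnected) : c v ∉ farColors G c v := by
  simp [farColors, (distToColor_eq_zero_iff hG).mpr (Or.inl rfl)]

theorem rainbowCode_eq_of_farColors_eq (h : G.ediam ≤ 2) (hcol : c u = c v)
    (hfar : farColors G c u = farColors G c v) : rainbowCode G c u = rainbowCode G c v := by
  have hG := preconnected_of_ediam_le_two h
  funext i
  have h0 : distToColor G c u i = 0 ↔ distToColor G c v i = 0 := by
    rw [distToColor_eq_zero_iff hG, distToColor_eq_zero_iff hG, hcol]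
  have h2 : distToColor G c u i = 2 ↔ distToColor G c v i = 2 := by
    simpa [farColors] using congr(i ∈ $hfar)
  have hu := distToColor_le_two (c := c) (v := u) (i := i) h
  have hv := distToColor_le_two (c := c) (v := v) (i := i) h
  simp only [rainbowCode]
  omega

theorem ncard_colorClass_le_sum_choose [Finite V] {d : ℕ} (h : G.ediam ≤ 2)
    (hdeg : ∀ v, (Gᶜ.neighborSet v).ncard ≤ d) (hinj : Function.Injective (rainbowCode G c))
    (w : Fin k) : {v | c v = w}.ncard ≤ ∑ j ∈ range (d + 1), (k - 1).choose j := by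
  set T := (range (d + 1)).biUnion fun j => (univ.erase w).powersetCard j
  have hmaps : ∀ v ∈ {v | c v = w}, farColors G c v ∈ (T : Set (Finset (Fin k))) := by
    rintro v rfl
    simp only [T, coe_biUnion, coe_range, Set.mem_iUnion, mem_coe, mem_powersetCard,
      Set.mem_Iio, exists_prop]
    refine ⟨_, Nat.lt_succ_of_le (card_farColors_le.trans (hdeg v)), fun i hi => ?_, rfl⟩
    refine mem_erase.mpr ⟨fun hiv => ?_, mem_univ i⟩
    exact color_notMem_farColors (preconnected_of_ediam_le_two h) (hiv ▸ hi)
  have hinjOn : Set.InjOn (farColors G c) {v | c v = w} := fun u hu v hv huv =>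
    hinj (rainbowCode_eq_of_farColors_eq h (hu.trans hv.symm) huv)
  calc {v | c v = w}.ncard ≤ (T : Set (Finset (Fin k))).ncard :=
        Set.ncard_le_ncard_of_injOn _ hmaps hinjOn
    _ = #T := Set.ncard_coe_finset T
    _ ≤ ∑ j ∈ range (d + 1), (k - 1).choose j :=
      card_biUnion_le.trans <| sum_le_sum fun j _ => by
        rw [card_powersetCard, card_erase_of_mem (mem_univ w), card_univ, Fintype.card_fin]

end Coloring

section RegularGraphs

variable {n : ℕ}

theorem rn2_compl_neighborSet_subset (hn : Even n) (v : Fin n) :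
    (Rn2 n)ᶜ.neighborSet v ⊆ {⟨(v + n / 2) % n, Nat.mod_lt _ v.pos⟩} := by
  intro x hx
  simp only [mem_neighborSet, compl_adj, Rn2, not_and_or, not_not] at hx
  obtain ⟨hvx, hx⟩ := hx
  simp only [Set.mem_singleton_iff, Fin.ext_iff]
  rcases hx with heq | hx | hx
  · exact absurd heq hvx
  · exact hx.symm
  · obtain ⟨m, rfl⟩ := hn
    have hm : (m + m) / 2 = m := by omega
    rw [← hx, hm, Nat.mod_add_mod, add_assoc, Nat.add_mod_right, Nat.mod_eq_of_lt x.isLt]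

theorem ncard_compl_neighborSet_rn2_le (hn : Even n) (v : Fin n) :
    ((Rn2 n)ᶜ.neighborSet v).ncard ≤ 1 :=
  (Set.ncard_le_ncard (rn2_compl_neighborSet_subset hn v)).trans_eq (Set.ncard_singleton _)

theorem ncard_compl_neighborSet_rn3_le (v : Fin n) : ((Rn3 n)ᶜ.neighborSet v).ncard ≤ 2 := by
  rw [Rn3, compl_compl]
  match n, v with
  | 1, _ => simp [cycleGraph_one_eq_bot]
  | m + 2, v =>
    rw [cycleGraph_neighborSet]
    exact (Set.ncard_insert_le _ _).trans (by rw [Set.ncard_singleton])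

theorem ncard_compl_neighborSet_rnt_le {t : ℕ} (ht : t = 2 ∨ t = 3) (hpar : t = 2 → Even n)
    (v : Fin n) : ((Rnt n t)ᶜ.neighborSet v).ncard ≤ t - 1 := by
  rcases ht with rfl | rfl
  · exact ncard_compl_neighborSet_rn2_le (hpar rfl) v
  · exact ncard_compl_neighborSet_rn3_le v

end RegularGraphs

end LocatingRainbow

open LocatingRainbow in
theorem color_class_card_le_general {n t r : ℕ} (hn : 5 ≤ n) (ht : t = 2 ∨ t = 3)
    (hpar : t = 2 → Even n) (c : Fin n → Fin r)
    (hc : IsLocatingRainbowColoring (Rnt n t) c) (w : Fin r) :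
    {v : Fin n | c v = w}.ncard ≤ 1 + ∑ k ∈ Finset.Icc 1 (t - 1), (r - 1).choose (t - k) := by
  have hdeg := ncard_compl_neighborSet_rnt_le ht hpar
  have hdiam : (Rnt n t).ediam ≤ 2 := ediam_le_two_of_ncard_compl_neighborSet_le hdeg <| by
    rw [Nat.card_eq_fintype_card, Fintype.card_fin]
    omega
  refine (ncard_colorClass_le_sum_choose hdiam hdeg hc.2 w).trans_eq ?_
  rcases ht with rfl | rfl
  · simp [Finset.sum_range_succ]
  · simp [Finset.sum_range_succ, show Finset.Icc 1 2 = {1, 2} from rfl]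
    ring

open LocatingRainbow in
/-- For `n ≥ 5`, `t ∈ {2,3}` (with `n` even in case `t = 2`), and a locating rainbow
`r`-coloring `c` of the `(n,t)`-regular graph with `r ≥ 3`, every color is used on at
most `1 + ∑_{k=1}^{t-1} C(r-1, t-k)` vertices. -/
theorem color_class_card_le {n t r : ℕ} (hn : 5 ≤ n) (ht : t = 2 ∨ t = 3)
    (hpar : t = 2 → Even n) (hr : 3 ≤ r) (c : Fin n → Fin r)
    (hc : IsLocatingRainbowColoring (Rnt n t) c) (w : Fin r) :
    {v : Fin n | c v = w}.ncard ≤ 1 + ∑ k ∈ Finset.Icc 1 (t - 1), (r - 1).choose (t - k) :=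
  color_class_card_le_general hn ht hpar c hc w
end
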